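/- Set A = F(c) − ℓ/(ℓ−1) and B = (ℓ/(ℓ−1))·c^d. Then for every x with 0 < x ≤ c, A + B·ρ^d·x^{−d} ≤ F(x) ≤ A + B·ρ^{−d}·x^{−d}. -/

import Mathlib

open Finset

/-!
On the geometric sequence `ρ ^ k * c` the recursion gives `F` exactly,
`F (ρ ^ k * c) = A + ℓ / (ℓ - 1) * ℓ ^ k`, and the choice of `d` makes `ρ ^ (-d) = ℓ`, so that
`ℓ ^ k = (ρ ^ k) ^ (-d)`.
A point `x ∈ (0, c]` lies in some `(ρ ^ (k + 1) * c, ρ ^ k * c]`, where `F` is squeezed between its two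
known endpoint values by monotonicity; replacing `ρ ^ k` by `x / c` costs at most one factor
`ρ ^ (∓d) = ℓ ^ (±1)`.
-/

theorem sum_Icc_one_pow_eq {K : Type*} [Field K] {ℓ : K} (hℓ : ℓ ≠ 1) (k : ℕ) :
    ∑ j ∈ Icc 1 k, ℓ ^ j = ℓ / (ℓ - 1) * ℓ ^ k - ℓ / (ℓ - 1) := by
  have hℓ' : ℓ - 1 ≠ 0 := sub_ne_zero.mpr hℓ
  rw [← Ico_add_one_right_eq_Icc, geom_sum_Ico hℓ (by omega)]
  field_simp
  ring

theorem Real.rpow_neg_log_div_log_one_div {ρ ℓ : ℝ} (hρ : 0 < ρ) (hρ1 : ρ ≠ 1) (hℓ : 0 < ℓ) :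
    ρ ^ (-(Real.log ℓ / Real.log (1 / ρ))) = ℓ := by
  have hlog : Real.log ρ ≠ 0 := Real.log_ne_zero_of_pos_of_ne_one hρ hρ1
  rw [Real.rpow_def_of_pos hρ, one_div, Real.log_inv, div_neg, neg_neg,
    mul_div_cancel₀ _ hlog, Real.exp_log hℓ]

theorem pow_le_rpow_neg_and_rpow_neg_le_pow_succ {ρ ℓ d y : ℝ} (hρ : 0 < ρ) (hd : 0 ≤ d)
    (hρd : ρ ^ (-d) = ℓ) {k : ℕ} (hlt : ρ ^ (k + 1) < y) (hle : y ≤ ρ ^ k) :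
    ℓ ^ k ≤ y ^ (-d) ∧ y ^ (-d) ≤ ℓ ^ (k + 1) := by
  have hpow (n : ℕ) : ℓ ^ n = (ρ ^ n) ^ (-d) := by rw [← hρd, Real.rpow_pow_comm hρ.le]
  have hy : 0 < y := (pow_pos hρ _).trans hlt
  rw [hpow, hpow]
  exact ⟨Real.rpow_le_rpow_of_nonpos hy hle (neg_nonpos.mpr hd),
    Real.rpow_le_rpow_of_nonpos (pow_pos hρ _) hlt.le (neg_nonpos.mpr hd)⟩

theorem ph_counting_function_bounds
    (ρ ℓ c : ℝ) (hρ : ρ ∈ Set.Ioo (0 : ℝ) 1) (hℓ : 1 < ℓ)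
    (d : ℝ) (hd : d = Real.log ℓ / Real.log (1 / ρ))
    (F : ℝ → ℝ)
    (hmono : AntitoneOn F (Set.Ioc 0 c))
    (hrec : ∀ k : ℕ, 1 ≤ k → F (ρ ^ k * c) = F c + ∑ j ∈ Finset.Icc 1 k, ℓ ^ j)
    (A B : ℝ) (hA : A = F c - ℓ / (ℓ - 1)) (hB : B = (ℓ / (ℓ - 1)) * c ^ d) :
    ∀ x : ℝ, 0 < x → x ≤ c →
      A + B * ρ ^ d * x ^ (-d) ≤ F x ∧ F x ≤ A + B * ρ ^ (-d) * x ^ (-d) := by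
  intro x hx hxc
  obtain ⟨hρ0, hρ1⟩ := hρ
  have hc : 0 < c := hx.trans_le hxc
  have hℓ1 : 0 < ℓ - 1 := sub_pos.mpr hℓ
  have hd0 : 0 ≤ d :=
    hd ▸ div_nonneg (Real.log_nonneg hℓ.le) (Real.log_nonneg (one_le_one_div hρ0 hρ1.le))
  have hρd : ρ ^ (-d) = ℓ := hd ▸ Real.rpow_neg_log_div_log_one_div hρ0 hρ1.ne (by linarith)
  have hρd' : ρ ^ d = ℓ⁻¹ := inv_eq_iff_eq_inv.mp (Real.rpow_neg hρ0.le d ▸ hρd)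
  have hscale : c ^ d * x ^ (-d) = (x / c) ^ (-d) := by
    rw [Real.div_rpow hx.le hc.le, Real.rpow_neg hc.le, div_inv_eq_mul, mul_comm]
  have hgrid (k : ℕ) : F (ρ ^ k * c) = A + ℓ / (ℓ - 1) * ℓ ^ k := by
    rcases k with _ | k
    · simp [hA]
    · rw [hrec _ (by omega), sum_Icc_one_pow_eq hℓ.ne', hA]
      ring
  have hmem (k : ℕ) : ρ ^ k * c ∈ Set.Ioc 0 c :=
    ⟨by positivity, mul_le_of_le_one_left hc.le (pow_le_one₀ hρ0.le hρ1.le)⟩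
  obtain ⟨k, hlt, hle⟩ :=
    exists_nat_pow_near_of_lt_one (div_pos hx hc) ((div_le_one hc).mpr hxc) hρ0 hρ1
  obtain ⟨hlow, hup⟩ := pow_le_rpow_neg_and_rpow_neg_le_pow_succ hρ0 hd0 hρd hlt hle
  have hF_ge := hgrid k ▸ hmono ⟨hx, hxc⟩ (hmem k) ((div_le_iff₀ hc).mp hle)
  have hF_le := hgrid (k + 1) ▸ hmono (hmem (k + 1)) ⟨hx, hxc⟩ ((lt_div_iff₀ hc).mp hlt).le
  subst hB
  constructor
  · calc A + ℓ / (ℓ - 1) * c ^ d * ρ ^ d * x ^ (-d)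
          = A + ℓ / (ℓ - 1) * ℓ⁻¹ * (x / c) ^ (-d) := by rw [hρd', ← hscale]; ring
      _ ≤ A + ℓ / (ℓ - 1) * ℓ⁻¹ * ℓ ^ (k + 1) := by gcongr
      _ = A + ℓ / (ℓ - 1) * ℓ ^ k := by field_simp; ring
      _ ≤ F x := hF_ge
  · calc F x ≤ A + ℓ / (ℓ - 1) * ℓ ^ (k + 1) := hF_le
      _ = A + ℓ / (ℓ - 1) * ℓ * ℓ ^ k := by ring
      _ ≤ A + ℓ / (ℓ - 1) * ℓ * (x / c) ^ (-d) := by gcongr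
      _ = A + ℓ / (ℓ - 1) * c ^ d * ρ ^ (-d) * x ^ (-d) := by rw [hρd, ← hscale]; ring
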